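/- For m, n ≥ 3, the state complexity of (Vₘ(a,b,c,d))ᴿ · Vₙ(d,c,b,a) is exactly 3·2^{m+n−2}, where Vₖ(a,b,c,d) is the language of the k-state DFA with states {0,…,k−1}, initial state 0, final state k−1, where a acts as the cycle (0,…,k−1), b as the transposition (k−2, k−1), c sends k−1 to k−2 fixing other states, and d is the identity; and Vₙ(d,c,b,a) is the permutationally equivalent language with the roles of letters a,b,c,d reversed (d is the cycle, c the transposition, b the singular map, a the identity). -/

import Mathlib

namespace SCPaper

/-- Reversal of a language. -/
def rev {α : Type} (L : Language α) : Language α := {w | w.reverse ∈ L}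

/-- Union of two languages. -/
def lunion {α : Type} (K L : Language α) : Language α := {w | w ∈ K ∨ w ∈ L}

/-- Intersection of two languages. -/
def linter {α : Type} (K L : Language α) : Language α := {w | w ∈ K ∧ w ∈ L}

/-- Difference of two languages. -/
def ldiff {α : Type} (K L : Language α) : Language α := {w | w ∈ K ∧ w ∉ L}

/-- Symmetric difference of two languages. -/
def lsymm {α : Type} (K L : Language α) : Language α := lunion (ldiff K L) (ldiff L K)

/-- Sizes (numbers of states) of complete DFAs recognizing `L`. -/
def complexitySet {α : Type} (L : Language α) : Set ℕ :=
  {n | ∃ M : DFA α (Fin n), M.accepts = L}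

/-- A language is regular if it is recognized by some finite DFA. -/
def Regular {α : Type} (L : Language α) : Prop := (complexitySet L).Nonempty

/-- State complexity: the number of states of a minimal DFA for `L`. -/
noncomputable def sc {α : Type} (L : Language α) : ℕ := sInf (complexitySet L)

/-- The cyclic permutation (0,1,…,n−1). -/
def cyc (n : ℕ) (i : Fin n) : Fin n :=
  ⟨(i.val + 1) % n, Nat.mod_lt _ (Nat.lt_of_le_of_lt (Nat.zero_le _) i.isLt)⟩

/-- The transposition (0,1). -/
def tp01 (n : ℕ) (i : Fin n) : Fin n :=
  if i.val = 0 then ⟨1 % n, Nat.mod_lt _ (Nat.lt_of_le_of_lt (Nat.zero_le _) i.isLt)⟩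
  else if i.val = 1 then ⟨0, Nat.lt_of_le_of_lt (Nat.zero_le _) i.isLt⟩
  else i

/-- The singular map sending n−1 to 0 and fixing everything else. -/
def sing (n : ℕ) (i : Fin n) : Fin n :=
  if i.val = n - 1 then ⟨0, Nat.lt_of_le_of_lt (Nat.zero_le _) i.isLt⟩ else i

/-- The transposition (n−2, n−1). -/
def tpTop (n : ℕ) (i : Fin n) : Fin n :=
  if i.val = n - 1 then ⟨n - 2, by have := i.isLt; omega⟩
  else if i.val = n - 2 then ⟨n - 1, by have := i.isLt; omega⟩
  else i

/-- The singular map sending n−1 to n−2 and fixing everything else. -/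
def singTop (n : ℕ) (i : Fin n) : Fin n :=
  if i.val = n - 1 then ⟨n - 2, by have := i.isLt; omega⟩ else i

/-- 𝒰ₙ(a,b,∅): binary alphabet, a = cycle (0,…,n−1), b = transposition (0,1),
initial state 0, final state n−1. -/
def U2dfa (n : ℕ) (h : 0 < n) : DFA (Fin 2) (Fin n) where
  step := fun i x => if x = 0 then cyc n i else tp01 n i
  start := ⟨0, h⟩
  accept := {i | i.val = n - 1}

def U2 (n : ℕ) (h : 0 < n) : Language (Fin 2) := (U2dfa n h).accepts

/-- 𝒰ₙ(a,b,c): a = cycle, b = transposition (0,1), c = (n−1 ↦ 0). -/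
def Udfa (n : ℕ) (h : 0 < n) : DFA (Fin 3) (Fin n) where
  step := fun i x => if x = 0 then cyc n i else if x = 1 then tp01 n i else sing n i
  start := ⟨0, h⟩
  accept := {i | i.val = n - 1}

def U (n : ℕ) (h : 0 < n) : Language (Fin 3) := (Udfa n h).accepts

/-- 𝒰ₙ(a,b,c) with final state set {0}. -/
def U0dfa (n : ℕ) (h : 0 < n) : DFA (Fin 3) (Fin n) where
  step := fun i x => if x = 0 then cyc n i else if x = 1 then tp01 n i else sing n i
  start := ⟨0, h⟩
  accept := {i | i.val = 0}

def U0 (n : ℕ) (h : 0 < n) : Language (Fin 3) := (U0dfa n h).accepts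

/-- 𝒰ₙ(a,b,c,d): a = cycle, b = transposition (0,1), c = (n−1 ↦ 0), d = identity. -/
def U4dfa (n : ℕ) (h : 0 < n) : DFA (Fin 4) (Fin n) where
  step := fun i x =>
    if x = 0 then cyc n i else if x = 1 then tp01 n i else if x = 2 then sing n i else i
  start := ⟨0, h⟩
  accept := {i | i.val = n - 1}

def U4 (n : ℕ) (h : 0 < n) : Language (Fin 4) := (U4dfa n h).accepts

/-- 𝒰ₙ(d,c,b,a): d = cycle, c = transposition (0,1), b = (n−1 ↦ 0), a = identity. -/
def U4dcbaDfa (n : ℕ) (h : 0 < n) : DFA (Fin 4) (Fin n) where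
  step := fun i x =>
    if x = 3 then cyc n i else if x = 2 then tp01 n i else if x = 1 then sing n i else i
  start := ⟨0, h⟩
  accept := {i | i.val = n - 1}

def U4dcba (n : ℕ) (h : 0 < n) : Language (Fin 4) := (U4dcbaDfa n h).accepts

/-- 𝒱ₙ(a,b,c,d): a = cycle, b = transposition (n−2,n−1), c = (n−1 ↦ n−2), d = identity. -/
def Vdfa (n : ℕ) (h : 0 < n) : DFA (Fin 4) (Fin n) where
  step := fun i x =>
    if x = 0 then cyc n i else if x = 1 then tpTop n i else if x = 2 then singTop n i else i
  start := ⟨0, h⟩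
  accept := {i | i.val = n - 1}

def V (n : ℕ) (h : 0 < n) : Language (Fin 4) := (Vdfa n h).accepts

/-- 𝒱ₙ(d,c,b,a): d = cycle, c = transposition (n−2,n−1), b = (n−1 ↦ n−2), a = identity. -/
def VdcbaDfa (n : ℕ) (h : 0 < n) : DFA (Fin 4) (Fin n) where
  step := fun i x =>
    if x = 3 then cyc n i else if x = 2 then tpTop n i else if x = 1 then singTop n i else i
  start := ⟨0, h⟩
  accept := {i | i.val = n - 1}

def Vdcba (n : ℕ) (h : 0 < n) : Language (Fin 4) := (VdcbaDfa n h).accepts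

/-- Direct product of two DFAs with a chosen set of final states. -/
def prodDFA {α σ₁ σ₂ : Type} (M : DFA α σ₁) (N : DFA α σ₂) (acc : Set (σ₁ × σ₂)) :
    DFA α (σ₁ × σ₂) where
  step := fun p x => (M.step p.1 x, N.step p.2 x)
  start := (M.start, N.start)
  accept := acc


/-- Chinese-remainder style pairing k ↦ (k mod m, k mod n). -/
def toPair (m n : ℕ) (hm : 0 < m) (hn : 0 < n) (k : Fin (m * n)) : Fin m × Fin n :=
  (⟨k.val % m, Nat.mod_lt _ hm⟩, ⟨k.val % n, Nat.mod_lt _ hn⟩)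

/-- Componentwise successor on the product of two cyclic automata. -/
def prodSucc (m n : ℕ) (p : Fin m × Fin n) : Fin m × Fin n := (cyc m p.1, cyc n p.2)

/-- One-letter subset transition of the reversed NFA of 𝒰ₙ(a,b,c). -/
def rstep (n : ℕ) (h : 0 < n) (S : Set (Fin n)) (x : Fin 3) : Set (Fin n) :=
  {q | (Udfa n h).step q x ∈ S}

/-- Action of a word on subsets in the reversed NFA of 𝒰ₙ(a,b,c). -/
def rword (n : ℕ) (h : 0 < n) (S : Set (Fin n)) (w : List (Fin 3)) : Set (Fin n) :=
  w.foldl (rstep n h) S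

end SCPaper

open SCPaper

open SCPaper

/-!
Let `K = Vₘ(a,b,c,d)` and `L = Vₙ(d,c,b,a)`. After reading `w`, the subset automaton
`DFA.revConcat` for `Kᴿ · L` is in the state `(S, T)`, where `S` is the set of states of `𝒱ₘ`
from which `wᴿ` leads to `m - 1` and `T` is the set of states that `𝒱ₙ(d,c,b,a)` reaches on the
suffixes `v` of the splittings `w = u v` with `uᴿ ∈ K`. Taking `u = w` shows `0 ∈ S → 0 ∈ T`,
which leaves `3 · 2^(m+n-2)` pairs, and all of them are reachable: reading `a` shifts `S` down by
one, and a following `c` or `b` restores `m - 1` while keeping or removing `m - 2`, so these words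
build every `S ∌ 0` with `T = ∅`; then `d` shifts `T` and `a^m` adds `0` to it, powers of `a`
rotate `S` onto the sets containing `0`, and `c` yields `S = ∅` and `S = {0,…,m-1}`. Distinct
pairs are distinguishable: `r ∈ T \ T'` is moved to the final state by `d^(n-1-r)`, and
`r ∈ S \ S'` becomes the difference `0 ∈ T \ T'` after `a^r b d`. By Myhill–Nerode the minimal
DFA has exactly `3 · 2^(m+n-2)` states.
-/

theorem natCard_set_eq_two_pow (ρ : Type*) [Finite ρ] : Nat.card (Set ρ) = 2 ^ Nat.card ρ := by
  have := Fintype.ofFinite ρ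
  simp only [Nat.card_eq_fintype_card, Fintype.card_set]

theorem natCard_mem_eq_notMem {ρ : Type*} (r : ρ) :
    Nat.card {S : Set ρ // r ∈ S} = Nat.card {S : Set ρ // r ∉ S} :=
  Nat.card_congr <| (compl_involutive.toPerm _).subtypeEquiv fun S => by simp

theorem natCard_add_natCard_compl {α : Type*} [Finite α] (p : α → Prop) :
    Nat.card {a // p a} + Nat.card {a // ¬p a} = Nat.card α := by
  classical
  rw [← Nat.card_sum]
  exact Nat.card_congr (Equiv.sumCompl p)

theorem two_mul_natCard_mem {ρ : Type*} [Finite ρ] (r : ρ) :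
    2 * Nat.card {S : Set ρ // r ∈ S} = 2 ^ Nat.card ρ := by
  rw [← natCard_set_eq_two_pow, ← natCard_add_natCard_compl (fun S : Set ρ => r ∈ S),
    ← natCard_mem_eq_notMem, two_mul]

theorem natCard_setOf_imp {σ τ : Type*} [Finite σ] [Finite τ] (s : σ) (t : τ) :
    Nat.card {p : Set σ × Set τ | s ∈ p.1 → t ∈ p.2} = 3 * 2 ^ (Nat.card σ + Nat.card τ - 2) := by
  have hbad : Nat.card {p : Set σ × Set τ // ¬(s ∈ p.1 → t ∈ p.2)} =
      Nat.card {S : Set σ // s ∈ S} * Nat.card {T : Set τ // t ∈ T} := by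
    rw [natCard_mem_eq_notMem t, ← Nat.card_prod]
    exact Nat.card_congr ((Equiv.subtypeEquivRight fun _ => Classical.not_imp).trans
      (Equiv.subtypeProdEquivProd (p := fun S : Set σ => s ∈ S) (q := fun T : Set τ => t ∉ T)))
  have htotal :=
    natCard_add_natCard_compl (α := Set σ × Set τ) fun p => s ∈ p.1 → t ∈ p.2
  rw [hbad, Nat.card_prod, natCard_set_eq_two_pow, natCard_set_eq_two_pow] at htotal
  obtain ⟨a, ha⟩ : ∃ a, Nat.card σ = a + 1 :=
    Nat.exists_eq_add_one.2 (Nat.card_pos_iff.2 ⟨⟨s⟩, inferInstance⟩)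
  obtain ⟨b, hb⟩ : ∃ b, Nat.card τ = b + 1 :=
    Nat.exists_eq_add_one.2 (Nat.card_pos_iff.2 ⟨⟨t⟩, inferInstance⟩)
  have hσ : Nat.card {S : Set σ // s ∈ S} = 2 ^ a := by
    have := two_mul_natCard_mem s
    rw [ha, pow_succ'] at this
    omega
  have hτ : Nat.card {T : Set τ // t ∈ T} = 2 ^ b := by
    have := two_mul_natCard_mem t
    rw [hb, pow_succ'] at this
    omega
  rw [hσ, hτ, ha, hb, pow_succ, pow_succ] at htotal
  rw [ha, hb, show a + 1 + (b + 1) - 2 = a + b by omega, pow_add]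
  change Nat.card {p : Set σ × Set τ // s ∈ p.1 → t ∈ p.2} = _
  linarith

namespace DFA

variable {α : Type*} {σ : Type*} (M : DFA α σ)

theorem step_mem_range_eval {s : σ} (hs : s ∈ Set.range M.eval) (x : α) :
    M.step s x ∈ Set.range M.eval := by
  obtain ⟨w, rfl⟩ := hs
  exact ⟨w ++ [x], M.eval_append_singleton w x⟩

theorem evalFrom_mem_range_eval {s : σ} (hs : s ∈ Set.range M.eval) (w : List α) :
    M.evalFrom s w ∈ Set.range M.eval := by
  obtain ⟨v, rfl⟩ := hs
  exact ⟨v ++ w, M.evalFrom_of_append _ v w⟩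

theorem acceptsFrom_step (s : σ) (x : α) :
    M.acceptsFrom (M.step s x) = (M.acceptsFrom s).leftQuotient [x] := rfl

section RevConcat

variable {τ : Type*} (A : DFA α σ) (B : DFA α τ)

def revConcat : DFA α (Set σ × Set τ) where
  step p x := ((A.step · x) ⁻¹' p.1,
    (B.step · x) '' p.2 ∪ {t | t = B.start ∧ A.step A.start x ∈ p.1})
  start := (A.accept, {t | t = B.start ∧ A.start ∈ A.accept})
  accept := {p | ∃ t ∈ p.2, t ∈ B.accept}

theorem revConcat_step (p : Set σ × Set τ) (x : α) :
    (A.revConcat B).step p x = ((A.step · x) ⁻¹' p.1,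
      (B.step · x) '' p.2 ∪ {t | t = B.start ∧ A.step A.start x ∈ p.1}) := rfl

theorem fst_eval_revConcat (w : List α) :
    ((A.revConcat B).eval w).1 = {q | A.evalFrom q w.reverse ∈ A.accept} := by
  induction w using List.reverseRecOn with
  | nil => rfl
  | append_singleton w x ih =>
    ext q
    simp [revConcat_step, ih]

theorem mem_snd_eval_revConcat {w : List α} {t : τ} :
    t ∈ ((A.revConcat B).eval w).2 ↔
      ∃ u v, u ++ v = w ∧ u.reverse ∈ A.accepts ∧ B.eval v = t := by
  induction w using List.reverseRecOn generalizing t with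
  | nil =>
    simp only [eval_nil, List.append_eq_nil_iff]
    constructor
    · rintro ⟨rfl, h⟩
      exact ⟨[], [], ⟨rfl, rfl⟩, h, rfl⟩
    · rintro ⟨u, v, ⟨rfl, rfl⟩, h, rfl⟩
      exact ⟨rfl, h⟩
  | append_singleton w x ih =>
    have hx : A.step A.start x ∈ ((A.revConcat B).eval w).1 ↔ (w ++ [x]).reverse ∈ A.accepts := by
      rw [fst_eval_revConcat, mem_accepts]
      simp [eval]
    simp only [eval_append_singleton, revConcat_step, Set.mem_union, Set.mem_image, ih,
      Set.mem_ofPred_eq, hx]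
    constructor
    · rintro (⟨s, ⟨u, v, rfl, hu, rfl⟩, rfl⟩ | ⟨rfl, h⟩)
      · exact ⟨u, v ++ [x], by simp, hu, by simp⟩
      · exact ⟨w ++ [x], [], by simp, h, rfl⟩
    · rintro ⟨u, v, huv, hu, rfl⟩
      rcases List.eq_nil_or_concat' v with rfl | ⟨v, y, rfl⟩
      · right
        rw [List.append_nil] at huv
        exact ⟨rfl, huv ▸ hu⟩
      · rw [← List.append_assoc] at huv
        obtain ⟨rfl, hy⟩ := List.append_inj' huv rfl
        obtain rfl : y = x := by simpa using hy
        exact Or.inl ⟨_, ⟨u, v, rfl, hu, rfl⟩, by simp⟩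

theorem start_mem_snd_eval_revConcat {w : List α} (h : A.start ∈ ((A.revConcat B).eval w).1) :
    B.start ∈ ((A.revConcat B).eval w).2 := by
  rw [fst_eval_revConcat] at h
  exact (mem_snd_eval_revConcat A B).2 ⟨w, [], w.append_nil, h, rfl⟩

end RevConcat

theorem accepts_revConcat {α : Type} {σ τ : Type*} (A : DFA α σ) (B : DFA α τ) :
    (A.revConcat B).accepts = SCPaper.rev A.accepts * B.accepts := by
  ext w
  change (∃ t ∈ ((A.revConcat B).eval w).2, t ∈ B.accept) ↔ _
  simp only [mem_snd_eval_revConcat, Language.mem_mul]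
  constructor
  · rintro ⟨_, ⟨u, v, rfl, hu, rfl⟩, hv⟩
    exact ⟨u, hu, v, hv, rfl⟩
  · rintro ⟨u, hu, v, hv, rfl⟩
    exact ⟨_, ⟨u, v, rfl, hu, rfl⟩, hv⟩

end DFA

namespace SCPaper

theorem sc_eq_natCard_range_leftQuotient {α : Type} {L : Language α}
    (hL : (Set.range L.leftQuotient).Finite) : sc L = Nat.card (Set.range L.leftQuotient) := by
  have := hL.to_subtype
  have hmem : Nat.card (Set.range L.leftQuotient) ∈ complexitySet L :=
    ⟨L.toDFA.reindex (Finite.equivFin _), by rw [DFA.accepts_reindex, Language.accepts_toDFA]⟩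
  refine le_antisymm (Nat.sInf_le hmem) (le_csInf ⟨_, hmem⟩ ?_)
  rintro k ⟨M, rfl⟩
  calc Nat.card (Set.range M.accepts.leftQuotient)
      ≤ Nat.card (Set.range M.acceptsFrom) := by
        rw [Language.leftQuotient_accepts]
        exact Nat.card_mono (Set.finite_range _) (Set.range_comp_subset_range _ _)
    _ ≤ k := (Finite.card_range_le _).trans_eq (Nat.card_fin k)

theorem sc_accepts_eq_natCard {α : Type} {σ : Type*} [Finite σ] (M : DFA α σ) :
    sc M.accepts = Nat.card (M.acceptsFrom '' Set.range M.eval) := by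
  have hfin : (Set.range M.accepts.leftQuotient).Finite := by
    rw [Language.leftQuotient_accepts, Set.range_comp]
    exact (Set.toFinite _).image _
  rw [sc_eq_natCard_range_leftQuotient hfin, Language.leftQuotient_accepts, Set.range_comp]

section Letters

variable {m : ℕ}

theorem cyc_val (q : Fin m) : (cyc m q).val = if q.val = m - 1 then 0 else q.val + 1 := by
  have := q.isLt
  unfold cyc
  split_ifs with h
  · simp [show q.val + 1 = m by omega]
  · exact Nat.mod_eq_of_lt (by omega)

theorem cyc_injective : Function.Injective (cyc m) := fun q r h => by
  have hv := congrArg Fin.val h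
  simp only [cyc_val] at hv
  have := q.isLt; have := r.isLt
  exact Fin.ext (by split_ifs at hv <;> omega)

theorem cyc_surjective : Function.Surjective (cyc m) :=
  Finite.surjective_of_injective cyc_injective

theorem cyc_iterate_val (k : ℕ) (q : Fin m) : ((cyc m)^[k] q).val = (q.val + k) % m := by
  induction k with
  | zero => simp [Nat.mod_eq_of_lt q.isLt]
  | succ k ih =>
    rw [Function.iterate_succ_apply']
    show (((cyc m)^[k] q).val + 1) % m = _
    rw [ih, Nat.mod_add_mod, Nat.add_assoc]

theorem cyc_iterate_self : (cyc m)^[m] = id :=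
  funext fun q => Fin.ext <| by simp [cyc_iterate_val, Nat.mod_eq_of_lt q.isLt]

theorem tpTop_val (q : Fin m) :
    (tpTop m q).val = if q.val = m - 1 then m - 2 else if q.val = m - 2 then m - 1 else q.val := by
  unfold tpTop
  split_ifs <;> rfl

theorem singTop_val (q : Fin m) : (singTop m q).val = if q.val = m - 1 then m - 2 else q.val := by
  unfold singTop
  split_ifs <;> rfl

theorem tpTop_involutive : Function.Involutive (tpTop m) := fun q => Fin.ext <| by
  simp only [tpTop_val]
  split_ifs <;> omega

end Letters

section Points

abbrev bot {k : ℕ} (h : 3 ≤ k) : Fin k := ⟨0, Nat.zero_lt_of_lt h⟩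
abbrev penult {k : ℕ} (h : 3 ≤ k) : Fin k := ⟨k - 2, Nat.sub_lt (Nat.zero_lt_of_lt h) two_pos⟩
abbrev top {k : ℕ} (h : 3 ≤ k) : Fin k := ⟨k - 1, Nat.sub_lt (Nat.zero_lt_of_lt h) one_pos⟩

variable {k : ℕ} (h : 3 ≤ k)

theorem bot_ne_top : bot h ≠ top h := Fin.ne_of_val_ne (show 0 ≠ k - 1 by omega)

theorem bot_ne_penult : bot h ≠ penult h := Fin.ne_of_val_ne (show 0 ≠ k - 2 by omega)

theorem penult_ne_top : penult h ≠ top h := Fin.ne_of_val_ne (show k - 2 ≠ k - 1 by omega)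

theorem cyc_penult : cyc k (penult h) = top h :=
  Fin.ext <| by simp only [cyc_val]; split_ifs <;> omega

theorem cyc_iterate_bot (q : Fin k) : (cyc k)^[q.val] (bot h) = q :=
  Fin.ext <| by simp [cyc_iterate_val, Nat.mod_eq_of_lt q.isLt]

theorem cyc_eq_bot_iff {q : Fin k} : cyc k q = bot h ↔ q = top h := by
  simp only [Fin.ext_iff, cyc_val]
  split_ifs <;> simp <;> omega

theorem tpTop_bot : tpTop k (bot h) = bot h :=
  Fin.ext <| by simp only [tpTop_val]; split_ifs <;> omega

theorem tpTop_top : tpTop k (top h) = penult h := Fin.ext <| by simp [tpTop_val]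

theorem tpTop_penult : tpTop k (penult h) = top h :=
  Fin.ext <| by simp only [tpTop_val]; split_ifs <;> omega

theorem tpTop_of_ne {q : Fin k} (h1 : q ≠ top h) (h2 : q ≠ penult h) : tpTop k q = q := by
  simp only [ne_eq, Fin.ext_iff] at h1 h2
  exact Fin.ext (by simp [tpTop_val, h1, h2])

theorem singTop_bot : singTop k (bot h) = bot h :=
  Fin.ext <| by simp only [singTop_val]; split_ifs <;> omega

theorem singTop_top : singTop k (top h) = penult h := Fin.ext <| by simp [singTop_val]

theorem singTop_of_ne {q : Fin k} (h1 : q ≠ top h) : singTop k q = q := by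
  simp only [ne_eq, Fin.ext_iff] at h1
  exact Fin.ext (by simp [singTop_val, h1])

theorem singTop_ne_top (q : Fin k) : singTop k q ≠ top h := by
  simp only [ne_eq, Fin.ext_iff, singTop_val]
  have := q.isLt
  split_ifs <;> omega

theorem singTop_preimage_top : singTop k ⁻¹' {top h} = ∅ :=
  Set.eq_empty_of_forall_notMem (singTop_ne_top h)

theorem singTop_preimage_insert_penult {S : Set (Fin k)} (hpen : penult h ∈ S)
    (htop : top h ∈ S) : singTop k ⁻¹' insert (penult h) (S \ {top h}) = S := by
  ext q
  by_cases hq : q = top h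
  · subst hq
    simp [singTop_top, htop]
  · simp only [Set.mem_preimage, singTop_of_ne h hq, Set.mem_insert_iff, Set.mem_sdiff,
      Set.mem_singleton_iff, hq, not_false_eq_true, and_true]
    exact ⟨fun h' => h'.elim (· ▸ hpen) id, Or.inr⟩

theorem tpTop_preimage_insert_penult {S : Set (Fin k)} (hpen : penult h ∉ S)
    (htop : top h ∈ S) : tpTop k ⁻¹' insert (penult h) (S \ {top h}) = S := by
  ext q
  by_cases hqt : q = top h
  · subst hqt
    simp [tpTop_top, htop]
  by_cases hqp : q = penult h
  · subst hqp
    simp [tpTop_penult, hpen, (penult_ne_top h).symm]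
  · simp [tpTop_of_ne h hqt hqp, hqt, hqp]

theorem singTop_preimage_insert_top {S : Set (Fin k)} (hpen : penult h ∉ S)
    (htop : top h ∉ S) : singTop k ⁻¹' insert (top h) S = S := by
  ext q
  by_cases hq : q = top h
  · subst hq
    simp [singTop_top, htop, hpen, penult_ne_top h]
  · simp [singTop_of_ne h hq, hq]

end Points

section RevConcatV

variable {m n : ℕ} (hm : 3 ≤ m) (hn : 3 ≤ n)

abbrev revConcatV : DFA (Fin 4) (Set (Fin m) × Set (Fin n)) :=
  (Vdfa m (Nat.zero_lt_of_lt hm)).revConcat (VdcbaDfa n (Nat.zero_lt_of_lt hn))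

theorem revConcatV_step_a (S : Set (Fin m)) (T : Set (Fin n)) :
    (revConcatV hm hn).step (S, T) 0 = (cyc m ⁻¹' S, T ∪ {t | t = bot hn ∧ cyc m (bot hm) ∈ S}) :=
  Prod.ext rfl (congrArg (· ∪ _) (Set.image_id' T))

theorem revConcatV_step_b (S : Set (Fin m)) (T : Set (Fin n)) :
    (revConcatV hm hn).step (S, T) 1 =
      (tpTop m ⁻¹' S, singTop n '' T ∪ {t | t = bot hn ∧ bot hm ∈ S}) := by
  simp only [DFA.revConcat_step]
  rw [← tpTop_bot hm]
  rfl

theorem revConcatV_step_c (S : Set (Fin m)) (T : Set (Fin n)) :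
    (revConcatV hm hn).step (S, T) 2 =
      (singTop m ⁻¹' S, tpTop n '' T ∪ {t | t = bot hn ∧ bot hm ∈ S}) := by
  simp only [DFA.revConcat_step]
  rw [← singTop_bot hm]
  rfl

theorem revConcatV_step_d (S : Set (Fin m)) (T : Set (Fin n)) :
    (revConcatV hm hn).step (S, T) 3 = (S, cyc n '' T ∪ {t | t = bot hn ∧ bot hm ∈ S}) :=
  rfl

end RevConcatV

section Reachability

variable {m n : ℕ} (hm : 3 ≤ m) (hn : 3 ≤ n)

theorem revConcatV_start : (revConcatV hm hn).start = ({top hm}, ∅) := by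
  refine Prod.ext (Set.ext fun q => ?_) (Set.ext fun t => ?_)
  · exact (Fin.ext_iff (b := top hm)).symm
  · simp only [Set.mem_empty_iff_false, iff_false]
    rintro ⟨-, h⟩
    have : 0 = m - 1 := h
    omega

theorem mem_range_of_top_mem (k : ℕ) (S : Set (Fin m)) (h0 : bot hm ∉ S) (htop : top hm ∈ S)
    (hk : ∀ q ∈ S, m - 1 - k ≤ q.val) : (S, ∅) ∈ Set.range (revConcatV hm hn).eval := by
  induction k generalizing S with
  | zero =>
    have : S = {top hm} := Set.eq_singleton_iff_unique_mem.2
      ⟨htop, fun q hq => Fin.ext (by have := hk q hq; have := q.isLt; simp; omega)⟩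
    exact ⟨[], by rw [this]; exact revConcatV_start hm hn⟩
  | succ k ih =>
    -- `S` is reached from `cyc m '' Y` by `a` and then `c` or `b`; the elements of `cyc m '' Y`
    -- exceed those of `S \ {top hm}` by one, so the induction hypothesis applies to it.
    set Y := insert (penult hm) (S \ {top hm})
    have hbotY : bot hm ∉ Y := by
      simp [Y, bot_ne_penult hm, h0]
    have hreach : (cyc m '' Y, ∅) ∈ Set.range (revConcatV hm hn).eval := by
      refine ih _ ?_ ⟨penult hm, Set.mem_insert _ _, cyc_penult hm⟩ ?_
      · rintro ⟨q, hq, hq'⟩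
        rw [cyc_eq_bot_iff] at hq'
        subst hq'
        simp [Y, (penult_ne_top hm).symm] at hq
      · rintro _ ⟨q, hq | ⟨hqS, hqtop⟩, rfl⟩
        · rw [hq, cyc_penult]
          exact Nat.sub_le_sub_left (Nat.zero_le k) _
        · have := hk q hqS
          simp only [Set.mem_singleton_iff, Fin.ext_iff] at hqtop
          rw [cyc_val, if_neg hqtop]
          omega
    have hstep : (revConcatV hm hn).step (cyc m '' Y, ∅) 0 = (Y, ∅) := by
      rw [revConcatV_step_a, Set.preimage_image_eq _ cyc_injective, cyc_injective.mem_set_image]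
      simp [hbotY]
    by_cases hpen : penult hm ∈ S
    · convert (revConcatV hm hn).step_mem_range_eval
        ((revConcatV hm hn).step_mem_range_eval hreach 0) 2 using 1
      rw [hstep, revConcatV_step_c, singTop_preimage_insert_penult hm hpen htop]
      simp [hbotY]
    · convert (revConcatV hm hn).step_mem_range_eval
        ((revConcatV hm hn).step_mem_range_eval hreach 0) 1 using 1
      rw [hstep, revConcatV_step_b, tpTop_preimage_insert_penult hm hpen htop]
      simp [hbotY]

theorem mem_range_snd_empty (S : Set (Fin m)) (h0 : bot hm ∉ S) :
    (S, ∅) ∈ Set.range (revConcatV hm hn).eval := by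
  have hTop : ∀ S, bot hm ∉ S → top hm ∈ S → (S, ∅) ∈ Set.range (revConcatV hm hn).eval :=
    fun S h0 htop => mem_range_of_top_mem hm hn m S h0 htop fun q _ => by omega
  by_cases htop : top hm ∈ S
  · exact hTop S h0 htop
  by_cases hpen : penult hm ∈ S
  · convert (revConcatV hm hn).step_mem_range_eval (hTop (tpTop m ⁻¹' S) ?_ ?_) 1 using 1
    · rw [revConcatV_step_b, ← Set.preimage_comp, tpTop_involutive.comp_self]
      simp [tpTop_bot, h0]
    · simpa [tpTop_bot] using h0
    · simpa [tpTop_top] using hpen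
  · convert (revConcatV hm hn).step_mem_range_eval (hTop (insert (top hm) S) ?_ ?_) 2 using 1
    · rw [revConcatV_step_c, singTop_preimage_insert_top hm hpen htop]
      simp [bot_ne_top hm, h0]
    · simp [bot_ne_top hm, h0]
    · exact Set.mem_insert _ _

theorem revConcatV_evalFrom_replicate_a (S : Set (Fin m)) (T : Set (Fin n)) (k : ℕ) :
    (revConcatV hm hn).evalFrom (S, T) (List.replicate k 0) = ((cyc m)^[k] ⁻¹' S,
      T ∪ {t | t = bot hn ∧ ∃ j, 0 < j ∧ j ≤ k ∧ (cyc m)^[j] (bot hm) ∈ S}) := by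
  induction k with
  | zero =>
    refine Prod.ext rfl (Set.ext fun t => ?_)
    exact ⟨.inl, fun h => h.elim id fun ⟨_, j, hj0, hj, _⟩ => absurd hj (by omega)⟩
  | succ k ih =>
    rw [List.replicate_succ', DFA.evalFrom_append_singleton, ih, revConcatV_step_a]
    refine Prod.ext (by simp only [← Set.preimage_comp, ← Function.iterate_succ])
      (Set.ext fun t => ?_)
    simp only [Set.mem_union, Set.mem_ofPred_eq, Set.mem_preimage, ← Function.iterate_succ_apply]
    constructor
    · rintro ((h | ⟨rfl, j, hj0, hjk, hj⟩) | ⟨rfl, h⟩)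
      · exact .inl h
      · exact .inr ⟨rfl, j, hj0, by omega, hj⟩
      · exact .inr ⟨rfl, k + 1, by omega, le_rfl, h⟩
    · rintro (h | ⟨rfl, j, hj0, hjk, hj⟩)
      · exact .inl (.inl h)
      · rcases Nat.lt_or_eq_of_le hjk with hjk | rfl
        · exact .inl (.inr ⟨rfl, j, hj0, by omega, hj⟩)
        · exact .inr ⟨rfl, hj⟩

theorem revConcatV_evalFrom_replicate_a_m (S : Set (Fin m)) (T : Set (Fin n)) {s : Fin m}
    (hs : s ∈ S) (hs0 : s ≠ bot hm) :
    (revConcatV hm hn).evalFrom (S, T) (List.replicate m 0) = (S, insert (bot hn) T) := by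
  have hpos : 0 < s.val := Nat.pos_of_ne_zero fun h => hs0 (Fin.ext h)
  rw [revConcatV_evalFrom_replicate_a, cyc_iterate_self, Set.preimage_id, Set.insert_eq,
    Set.union_comm]
  congr
  ext t
  exact ⟨And.left, fun ht => ⟨ht, s.val, hpos, s.isLt.le, by rwa [cyc_iterate_bot]⟩⟩

theorem mem_range_of_bot_notMem {S : Set (Fin m)} (hne : S.Nonempty)
    (h0 : bot hm ∉ S) (T : Set (Fin n)) : (S, T) ∈ Set.range (revConcatV hm hn).eval := by
  obtain ⟨s, hs⟩ := hne
  suffices ∀ k, ∀ T : Set (Fin n), (∀ t ∈ T, t.val < k) →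
      (S, T) ∈ Set.range (revConcatV hm hn).eval from this n T fun t _ => t.isLt
  intro k
  induction k with
  | zero =>
    intro T hT
    rw [Set.eq_empty_of_forall_notMem fun t ht => Nat.not_lt_zero _ (hT t ht)]
    exact mem_range_snd_empty hm hn S h0
  | succ k ih =>
    intro T hT
    have hT' : (S, T \ {bot hn}) ∈ Set.range (revConcatV hm hn).eval := by
      convert (revConcatV hm hn).step_mem_range_eval (ih (cyc n ⁻¹' (T \ {bot hn})) ?_) 3 using 1
      · rw [revConcatV_step_d, Set.image_preimage_eq _ cyc_surjective]
        simp [h0]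
      · rintro t ⟨htT, ht0⟩
        have := hT _ htT
        rw [Set.mem_singleton_iff, cyc_eq_bot_iff, Fin.ext_iff] at ht0
        rw [cyc_val, if_neg ht0] at this
        omega
    by_cases hb : bot hn ∈ T
    · convert (revConcatV hm hn).evalFrom_mem_range_eval hT' (List.replicate m 0) using 1
      rw [revConcatV_evalFrom_replicate_a_m hm hn _ _ hs (ne_of_mem_of_not_mem hs h0),
        Set.insert_sdiff_singleton, Set.insert_eq_of_mem hb]
    · rwa [Set.sdiff_singleton_eq_self hb] at hT'

theorem mem_range_of_bot_mem {S : Set (Fin m)} (h0 : bot hm ∈ S) (hS : S ≠ Set.univ)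
    {T : Set (Fin n)} (hT : bot hn ∈ T) : (S, T) ∈ Set.range (revConcatV hm hn).eval := by
  obtain ⟨g, hg⟩ := (Set.ne_univ_iff_exists_notMem S).1 hS
  obtain ⟨q, hq⟩ := (cyc_surjective.iterate g.val) (bot hm)
  have hS' : bot hm ∉ (cyc m)^[g.val] ⁻¹' S := by
    rwa [Set.mem_preimage, cyc_iterate_bot]
  convert (revConcatV hm hn).evalFrom_mem_range_eval
    (mem_range_of_bot_notMem hm hn ⟨q, by rwa [Set.mem_preimage, hq]⟩ hS' T)
    (List.replicate (m - g.val) 0) using 1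
  rw [revConcatV_evalFrom_replicate_a, ← Set.preimage_comp, ← Function.iterate_add,
    Nat.add_sub_cancel' g.isLt.le, cyc_iterate_self, Set.preimage_id,
    Set.union_eq_left.2 fun t ht => ht.1 ▸ hT]

theorem mem_range_fst_univ {T : Set (Fin n)} (hT : bot hn ∈ T) :
    (Set.univ, T) ∈ Set.range (revConcatV hm hn).eval := by
  convert (revConcatV hm hn).step_mem_range_eval (mem_range_of_bot_mem hm hn
    (S := {top hm}ᶜ) (bot_ne_top hm) (Set.compl_ne_univ.2 (Set.singleton_nonempty _))
    (T := tpTop n '' T) ⟨_, hT, tpTop_bot hn⟩) 2 using 1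
  rw [revConcatV_step_c, Set.image_image]
  simp [tpTop_involutive _, singTop_preimage_top hm, bot_ne_top hm, hT]

theorem mem_range_fst_empty (T : Set (Fin n)) : (∅, T) ∈ Set.range (revConcatV hm hn).eval := by
  convert (revConcatV hm hn).step_mem_range_eval (mem_range_of_bot_notMem hm hn
    (Set.singleton_nonempty (top hm)) (bot_ne_top hm) (tpTop n '' T)) 2 using 1
  rw [revConcatV_step_c, Set.image_image]
  simp [tpTop_involutive _, singTop_preimage_top hm, bot_ne_top hm]

theorem range_eval_revConcatV :
    Set.range (revConcatV hm hn).eval = {p | bot hm ∈ p.1 → bot hn ∈ p.2} := by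
  ext ⟨S, T⟩
  refine ⟨?_, fun h => ?_⟩
  · rintro ⟨w, hw⟩
    rw [← hw]
    exact DFA.start_mem_snd_eval_revConcat _ _
  rcases S.eq_empty_or_nonempty with rfl | hne
  · exact mem_range_fst_empty hm hn T
  by_cases h0 : bot hm ∈ S
  · by_cases hu : S = Set.univ
    · subst hu
      exact mem_range_fst_univ hm hn (h h0)
    · exact mem_range_of_bot_mem hm hn h0 hu (h h0)
  · exact mem_range_of_bot_notMem hm hn hne h0 T

end Reachability

section Distinguishability

variable {m n : ℕ} (hm : 3 ≤ m) (hn : 3 ≤ n)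

theorem snd_subset_of_acceptsFrom_eq {p p' : Set (Fin m) × Set (Fin n)}
    (h : (revConcatV hm hn).acceptsFrom p = (revConcatV hm hn).acceptsFrom p') : p.2 ⊆ p'.2 := by
  intro r hr
  obtain ⟨k, hk⟩ : ∃ k, r.val + k = n - 1 := ⟨n - 1 - r.val, by omega⟩
  induction k generalizing p p' r with
  | zero =>
    have hacc : [] ∈ (revConcatV hm hn).acceptsFrom p := ⟨r, hr, hk⟩
    rw [h] at hacc
    obtain ⟨t, ht, htv⟩ := hacc
    rwa [Fin.ext (htv.trans hk.symm : t.val = r.val)] at ht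
  | succ k ih =>
    obtain ⟨S, T⟩ := p
    obtain ⟨S', T'⟩ := p'
    have hrtop : r ≠ top hn := fun h => by simp [h] at hk
    have := ih (p := (revConcatV hm hn).step (S, T) 3) (p' := (revConcatV hm hn).step (S', T') 3)
      (by rw [DFA.acceptsFrom_step, DFA.acceptsFrom_step, h]) (r := cyc n r)
      (by rw [revConcatV_step_d]; exact .inl ⟨r, hr, rfl⟩)
      (by rw [cyc_val, if_neg fun h => hrtop (Fin.ext h)]; omega)
    rw [revConcatV_step_d] at this
    rcases this with ⟨t, ht, he⟩ | ⟨he, -⟩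
    · rwa [← cyc_injective he]
    · exact absurd ((cyc_eq_bot_iff hn).1 he) hrtop

theorem fst_subset_of_acceptsFrom_eq {p p' : Set (Fin m) × Set (Fin n)}
    (h : (revConcatV hm hn).acceptsFrom p = (revConcatV hm hn).acceptsFrom p') : p.1 ⊆ p'.1 := by
  intro r hr
  obtain ⟨k, hk⟩ : ∃ k, r.val = k := ⟨_, rfl⟩
  induction k generalizing p p' r with
  | zero =>
    obtain rfl : r = bot hm := Fin.ext hk
    -- After `b d` the second component contains `0` iff the first one did: `b` fixes `0` in `𝒱ₘ`,
    -- while the image of `b d` in `𝒱ₙ(d,c,b,a)` misses `0`.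
    by_contra h0
    obtain ⟨S, T⟩ := p
    obtain ⟨S', T'⟩ := p'
    have hsub := snd_subset_of_acceptsFrom_eq hm hn
      (p := (revConcatV hm hn).step ((revConcatV hm hn).step (S, T) 1) 3)
      (p' := (revConcatV hm hn).step ((revConcatV hm hn).step (S', T') 1) 3)
      (by simp only [DFA.acceptsFrom_step, h])
    simp only [revConcatV_step_b, revConcatV_step_d] at hsub
    rcases hsub (.inr ⟨rfl, by rwa [Set.mem_preimage, tpTop_bot]⟩) with ⟨t, ht, he⟩ | ⟨-, h'⟩
    · rw [cyc_eq_bot_iff] at he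
      subst he
      rcases ht with ⟨u, -, hu⟩ | ⟨hu, -⟩
      · exact singTop_ne_top hn u hu
      · exact bot_ne_top hn hu.symm
    · exact h0 (by rwa [Set.mem_preimage, tpTop_bot] at h')
  | succ k ih =>
    have hq : cyc m ⟨k, by omega⟩ = r := Fin.ext <| by
      rw [cyc_val, if_neg (by simp; omega)]
      exact hk.symm
    have := ih (p := (revConcatV hm hn).step p 0) (p' := (revConcatV hm hn).step p' 0)
      (by rw [DFA.acceptsFrom_step, DFA.acceptsFrom_step, h]) (r := ⟨k, by omega⟩)
      (show cyc m _ ∈ p.1 by rwa [hq]) rfl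
    exact hq ▸ this

theorem revConcatV_acceptsFrom_injective : Function.Injective (revConcatV hm hn).acceptsFrom :=
  fun _ _ h => Prod.ext (fst_subset_of_acceptsFrom_eq hm hn h |>.antisymm
      (fst_subset_of_acceptsFrom_eq hm hn h.symm))
    (snd_subset_of_acceptsFrom_eq hm hn h |>.antisymm (snd_subset_of_acceptsFrom_eq hm hn h.symm))

end Distinguishability

end SCPaper

theorem reversed_product_KRL_tight (m n : ℕ) (hm : 3 ≤ m) (hn : 3 ≤ n) :
    sc (rev (V m (by omega)) * Vdcba n (by omega)) = 3 * 2 ^ (m + n - 2) := by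
  rw [V, Vdcba, ← DFA.accepts_revConcat, sc_accepts_eq_natCard, range_eval_revConcatV hm hn,
    Nat.card_image_of_injOn (revConcatV_acceptsFrom_injective hm hn).injOn,
    natCard_setOf_imp, Nat.card_fin, Nat.card_fin]
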